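/- Let X be a Banach space whose dual X* has the Schur property, i.e., every weakly null sequence in X* converges to 0 in norm. Then ca_ρ(x_n) = δ(x_n) for every bounded sequence (x_n) in X. -/

import Mathlib

open Metric NormedSpace Filter Topology Set

noncomputable section

/-- A subset of a Banach space is weakly compact if it is compact in the weak topology. -/
def IsWeaklyCompact {Z : Type*} [NormedAddCommGroup Z] [NormedSpace ℝ Z] (K : Set Z) : Prop :=
  IsCompact (toWeakSpace ℝ Z '' K)

/-- `ca (x_k) = inf_n sup_{i,j ≥ n} ‖x_i - x_j‖`. -/
def ca {Z : Type*} [NormedAddCommGroup Z] (x : ℕ → Z) : ℝ :=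
  ⨅ n : ℕ, sSup {r : ℝ | ∃ i j : ℕ, n ≤ i ∧ n ≤ j ∧ r = ‖x i - x j‖}

/-- `wca` is the infimum of `ca` over all subsequences. -/
def wca {Z : Type*} [NormedAddCommGroup Z] (x : ℕ → Z) : ℝ :=
  ⨅ φ : {φ : ℕ → ℕ // StrictMono φ}, ca (x ∘ φ)

/-- A sequence is weakly Cauchy if `(x*(x_k))` converges for every functional `x*`. -/
def WeaklyCauchy {Z : Type*} [NormedAddCommGroup Z] [NormedSpace ℝ Z] (x : ℕ → Z) : Prop :=
  ∀ f : StrongDual ℝ Z, ∃ l : ℝ, Tendsto (fun n => f (x n)) atTop (nhds l)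

/-- A sequence is weakly null if `x*(x_k) → 0` for every functional `x*`. -/
def WeaklyNull {Z : Type*} [NormedAddCommGroup Z] [NormedSpace ℝ Z] (x : ℕ → Z) : Prop :=
  ∀ f : StrongDual ℝ Z, Tendsto (fun n => f (x n)) atTop (nhds 0)

/-- `cc T`: measure of non-complete-continuity of an operator. -/
def cc {X Y : Type*} [NormedAddCommGroup X] [NormedSpace ℝ X]
    [NormedAddCommGroup Y] [NormedSpace ℝ Y] (T : X →L[ℝ] Y) : ℝ :=
  sSup {r : ℝ | ∃ x : ℕ → X, (∀ n, ‖x n‖ ≤ 1) ∧ WeaklyCauchy x ∧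
    r = ca (fun n => T (x n))}

/-- Non-symmetrized Hausdorff distance `d̂(A,B) = sup_{a ∈ A} dist(a, B)`. -/
def dhat {Z : Type*} [NormedAddCommGroup Z] (A B : Set Z) : ℝ :=
  ⨆ a : A, infDist (a : Z) B

/-- de Blasi measure of weak non-compactness. -/
def deBlasiOmega {Z : Type*} [NormedAddCommGroup Z] [NormedSpace ℝ Z] (A : Set Z) : ℝ :=
  ⨅ K : {K : Set Z // K.Nonempty ∧ IsWeaklyCompact K}, dhat A K

/-- Hausdorff measure of non-compactness. -/
def hausdorffChi {Z : Type*} [NormedAddCommGroup Z] (A : Set Z) : ℝ :=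
  ⨅ F : {F : Set Z // F.Finite ∧ F.Nonempty}, dhat A F

/-- weak* closure of a set of functionals. -/
def wstarClosure {E : Type*} [NormedAddCommGroup E] [NormedSpace ℝ E]
    (A : Set (StrongDual ℝ E)) : Set (StrongDual ℝ E) :=
  StrongDual.toWeakDual ⁻¹' closure (StrongDual.toWeakDual '' A)

/-- `wk_Z(A) = d̂(cl_{w*}(ι(A)), ι(Z))` in the bidual. -/
def wkMeasure {Z : Type*} [NormedAddCommGroup Z] [NormedSpace ℝ Z] (A : Set Z) : ℝ :=
  dhat (wstarClosure ((inclusionInDoubleDual ℝ Z) '' A))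
    (Set.range (inclusionInDoubleDual ℝ Z))

/-- `z` is a weak* cluster point of the sequence `u` of functionals. -/
def IsWeakStarClusterPt {E : Type*} [NormedAddCommGroup E] [NormedSpace ℝ E]
    (z : StrongDual ℝ E) (u : ℕ → StrongDual ℝ E) : Prop :=
  MapClusterPt (StrongDual.toWeakDual z) atTop (fun n => StrongDual.toWeakDual (u n))

/-- `wck(A)`. -/
def wck {Z : Type*} [NormedAddCommGroup Z] [NormedSpace ℝ Z] (A : Set Z) : ℝ :=
  sSup {r : ℝ | ∃ x : ℕ → Z, (∀ n, x n ∈ A) ∧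
    r = sInf {s : ℝ | ∃ (z : StrongDual ℝ (StrongDual ℝ Z)) (x₀ : Z),
      IsWeakStarClusterPt z (fun n => inclusionInDoubleDual ℝ Z (x n)) ∧
      s = ‖z - inclusionInDoubleDual ℝ Z x₀‖}}

/-- `ca_ρ` of a sequence. -/
def caRho {Z : Type*} [NormedAddCommGroup Z] [NormedSpace ℝ Z] (x : ℕ → Z) : ℝ :=
  ⨆ K : {K : Set (StrongDual ℝ Z) // K ⊆ closedBall 0 1 ∧ IsWeaklyCompact K},
    ⨅ n : ℕ, sSup {r : ℝ | ∃ i j : ℕ, n ≤ i ∧ n ≤ j ∧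
      ∃ f ∈ K.1, r = |f (x i) - f (x j)|}

/-- `wca_ρ` of a sequence. -/
def wcaRho {Z : Type*} [NormedAddCommGroup Z] [NormedSpace ℝ Z] (x : ℕ → Z) : ℝ :=
  ⨅ φ : {φ : ℕ → ℕ // StrictMono φ}, caRho (x ∘ φ)

/-- `ca_{ρ*}` of a sequence in a dual space. -/
def caRhoStar {Z : Type*} [NormedAddCommGroup Z] [NormedSpace ℝ Z]
    (x : ℕ → StrongDual ℝ Z) : ℝ :=
  ⨆ K : {K : Set Z // K ⊆ closedBall 0 1 ∧ IsWeaklyCompact K},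
    ⨅ n : ℕ, sSup {r : ℝ | ∃ i j : ℕ, n ≤ i ∧ n ≤ j ∧
      ∃ v ∈ K.1, r = |x i v - x j v|}

/-- `wca_{ρ*}` of a sequence in a dual space. -/
def wcaRhoStar {Z : Type*} [NormedAddCommGroup Z] [NormedSpace ℝ Z]
    (x : ℕ → StrongDual ℝ Z) : ℝ :=
  ⨅ φ : {φ : ℕ → ℕ // StrictMono φ}, caRhoStar (x ∘ φ)

/-- `δ(x_k)`. -/
def deltaSeq {Z : Type*} [NormedAddCommGroup Z] [NormedSpace ℝ Z] (x : ℕ → Z) : ℝ :=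
  ⨆ f : (closedBall (0 : StrongDual ℝ Z) 1),
    ⨅ n : ℕ, sSup {r : ℝ | ∃ i j : ℕ, n ≤ i ∧ n ≤ j ∧
      r = |(f : StrongDual ℝ Z) (x i) - (f : StrongDual ℝ Z) (x j)|}

/-- The adjoint of a bounded operator between Banach spaces. -/
def adjointOp {X Y : Type*} [NormedAddCommGroup X] [NormedSpace ℝ X]
    [NormedAddCommGroup Y] [NormedSpace ℝ Y] (T : X →L[ℝ] Y) :
    StrongDual ℝ Y →L[ℝ] StrongDual ℝ X :=
  (ContinuousLinearMap.compL ℝ X Y ℝ).flip T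

/-!
A weakly compact subset of a Banach space is weakly sequentially compact (the easy half of
Eberlein–Šmulian: the closed span of a sequence is separable, so countably many functionals
separate its points and metrize the weak topology on a compact set containing the sequence).
When `X*` has the Schur property, weakly convergent sequences in `X*` converge in norm, so every
weakly compact `K ⊆ B_{X*}` is norm compact. Covering such a `K` by finitely many small balls
shows that the oscillation of `(x_n)` over `K` is controlled by its oscillation at the finitely
many centres, which gives `ca_ρ ≤ δ`; the reverse inequality uses the weakly compact singletons.
-/

def HasSchurProperty (Z : Type*) [NormedAddCommGroup Z] [NormedSpace ℝ Z] : Prop :=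
  ∀ u : ℕ → Z, WeaklyNull u → Tendsto (fun n => ‖u n‖) atTop (𝓝 0)

section WeakTopology

open TopologicalSpace

variable {Z : Type*} [NormedAddCommGroup Z] [NormedSpace ℝ Z]

theorem TopologicalSpace.IsSeparable.exists_seq_dual_separating {s : Set Z}
    (hs : IsSeparable s) :
    ∃ D : ℕ → StrongDual ℝ Z, ∀ z ∈ s, (∀ i, D i z = 0) → z = 0 := by
  obtain ⟨c, hc, hsc⟩ := hs
  obtain ⟨w, hw⟩ := (hc.union (countable_singleton 0)).exists_eq_range (by simp)
  have hsw : s ⊆ closure (range w) := hsc.trans (closure_mono (hw ▸ subset_union_left))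
  choose D hD1 hDw using fun i => exists_dual_vector'' ℝ (w i)
  refine ⟨D, fun z hz hDz => norm_le_zero_iff.mp (le_of_forall_pos_le_add fun ε hε => ?_)⟩
  obtain ⟨i, hi⟩ := Metric.mem_closure_range_iff.mp (hsw hz) (ε / 2) (by positivity)
  have hwi : ‖w i‖ ≤ dist z (w i) := by
    calc ‖w i‖ = D i (w i - z) := by simp [hDz i, hDw i]
      _ ≤ ‖D i‖ * ‖w i - z‖ := (le_abs_self _).trans ((D i).le_opNorm _)
      _ ≤ dist z (w i) := by
        rw [dist_comm, dist_eq_norm]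
        exact mul_le_of_le_one_left (norm_nonneg _) (hD1 i)
  calc ‖z‖ ≤ dist z (w i) + ‖w i‖ := by
        simpa [dist_eq_norm] using norm_le_norm_sub_add z (w i)
    _ ≤ 0 + ε := by linarith

theorem WeakSpace.isSeqCompact_of_isCompact_of_subset_isSeparable {C : Set (WeakSpace ℝ Z)}
    (hC : IsCompact C) {W : Submodule ℝ Z} (hW : IsSeparable (W : Set Z))
    (hCW : C ⊆ toWeakSpace ℝ Z '' W) : IsSeqCompact C := by
  obtain ⟨D, hD⟩ := hW.exists_seq_dual_separating
  have : CompactSpace C := isCompact_iff_compactSpace.mp hC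
  have : MetrizableSpace C := by
    refine Metric.PiNatEmbed.TopologicalSpace.MetrizableSpace.of_countable_separating (X := C)
      (fun i z => D i ((toWeakSpace ℝ Z).symm z))
      (fun i => (WeakBilin.eval_continuous (topDualPairing ℝ Z).flip (D i)).comp
        continuous_subtype_val) ?_
    intro z z' hne
    by_contra! heq
    obtain ⟨a, ha, hza⟩ := hCW z.2
    obtain ⟨b, hb, hzb⟩ := hCW z'.2
    refine hne (Subtype.ext ?_)
    rw [← hza, ← hzb, sub_eq_zero.mp (hD _ (W.sub_mem ha hb) fun i => ?_)]
    simpa [sub_eq_zero, ← hza, ← hzb] using heq i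
  exact isSeqCompact_iff_seqCompactSpace.mpr inferInstance

theorem WeakSpace.isSeqCompact_of_isCompact {C : Set (WeakSpace ℝ Z)} (hC : IsCompact C) :
    IsSeqCompact C := by
  intro v hv
  set u : ℕ → Z := fun n => (toWeakSpace ℝ Z).symm (v n)
  set W := (Submodule.span ℝ (range u)).topologicalClosure
  have hW : IsSeparable (W : Set Z) := by
    rw [Submodule.topologicalClosure_coe]
    exact (countable_range u).isSeparable.span.closure
  have hvW : closure (range v) ⊆ toWeakSpace ℝ Z '' W := by
    rw [Submodule.topologicalClosure_coe, (Submodule.convex _).toWeakSpace_closure ℝ]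
    refine closure_mono ?_
    rintro _ ⟨n, rfl⟩
    exact ⟨u n, Submodule.subset_span ⟨n, rfl⟩, rfl⟩
  have hvC : closure (range v) ⊆ C := closure_minimal (range_subset_iff.mpr hv) hC.isClosed
  obtain ⟨a, ha, φ, hφ, hlim⟩ :=
    isSeqCompact_of_isCompact_of_subset_isSeparable
      (hC.of_isClosed_subset isClosed_closure hvC) hW hvW
      fun n => subset_closure (mem_range_self n)
  exact ⟨a, hvC ha, φ, hφ, hlim⟩

theorem IsWeaklyCompact.isCompact_of_hasSchurProperty (hZ : HasSchurProperty Z) {K : Set Z}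
    (hK : IsWeaklyCompact K) : IsCompact K := by
  refine IsSeqCompact.isCompact fun u hu => ?_
  obtain ⟨_, ⟨g, hg, rfl⟩, φ, hφ, hlim⟩ :=
    WeakSpace.isSeqCompact_of_isCompact hK (x := fun n => toWeakSpace ℝ Z (u n))
      fun n => mem_image_of_mem _ (hu n)
  refine ⟨g, hg, φ, hφ, tendsto_iff_norm_sub_tendsto_zero.mpr (hZ _ fun Φ => ?_)⟩
  have hΦ : Tendsto (fun n => Φ (u (φ n))) atTop (𝓝 (Φ g)) :=
    ((WeakBilin.eval_continuous _ Φ).tendsto _).comp hlim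
  simpa using hΦ.sub_const (Φ g)

theorem isWeaklyCompact_singleton (z : Z) : IsWeaklyCompact ({z} : Set Z) := by
  simp [IsWeaklyCompact]

end WeakTopology

section Oscillation

variable {X : Type*} [NormedAddCommGroup X] [NormedSpace ℝ X] {x : ℕ → X} {M : ℝ}
  {K : Set (StrongDual ℝ X)}

def tailOsc (x : ℕ → X) (K : Set (StrongDual ℝ X)) (n : ℕ) : ℝ :=
  sSup {r : ℝ | ∃ i j : ℕ, n ≤ i ∧ n ≤ j ∧ ∃ f ∈ K, r = |f (x i) - f (x j)|}

def asympOsc (x : ℕ → X) (K : Set (StrongDual ℝ X)) : ℝ :=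
  ⨅ n : ℕ, tailOsc x K n

theorem caRho_eq_iSup_asympOsc (x : ℕ → X) :
    caRho x = ⨆ K : {K : Set (StrongDual ℝ X) // K ⊆ closedBall 0 1 ∧ IsWeaklyCompact K},
      asympOsc x K.1 :=
  rfl

theorem deltaSeq_eq_iSup_asympOsc (x : ℕ → X) :
    deltaSeq x =
      ⨆ f : closedBall (0 : StrongDual ℝ X) 1, asympOsc x {(f : StrongDual ℝ X)} := by
  simp [deltaSeq, asympOsc, tailOsc]

theorem abs_apply_sub_apply_le (hx : ∀ n, ‖x n‖ ≤ M) (f : StrongDual ℝ X) (i j : ℕ) :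
    |f (x i) - f (x j)| ≤ ‖f‖ * (2 * M) := by
  rw [← map_sub, ← Real.norm_eq_abs]
  refine (f.le_opNorm _).trans (mul_le_mul_of_nonneg_left ?_ (norm_nonneg f))
  linarith [norm_sub_le (x i) (x j), hx i, hx j]

theorem tailOsc_nonneg (x : ℕ → X) (K : Set (StrongDual ℝ X)) (n : ℕ) :
    0 ≤ tailOsc x K n :=
  Real.sSup_nonneg <| by rintro _ ⟨i, j, -, -, f, -, rfl⟩; exact abs_nonneg _

theorem abs_apply_sub_apply_le_two_mul (hx : ∀ n, ‖x n‖ ≤ M) {f : StrongDual ℝ X}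
    (hf : ‖f‖ ≤ 1) (i j : ℕ) : |f (x i) - f (x j)| ≤ 2 * M := by
  have hM : 0 ≤ 2 * M := by linarith [norm_nonneg (x 0), hx 0]
  exact (abs_apply_sub_apply_le hx f i j).trans (mul_le_of_le_one_left hM hf)

theorem tailOsc_le (hx : ∀ n, ‖x n‖ ≤ M) (hK : K ⊆ closedBall 0 1) (n : ℕ) :
    tailOsc x K n ≤ 2 * M := by
  refine Real.sSup_le ?_ (by linarith [norm_nonneg (x 0), hx 0])
  rintro _ ⟨i, j, -, -, f, hf, rfl⟩
  exact abs_apply_sub_apply_le_two_mul hx (mem_closedBall_zero_iff.mp (hK hf)) i j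

theorem abs_apply_sub_apply_le_tailOsc (hx : ∀ n, ‖x n‖ ≤ M) (hK : K ⊆ closedBall 0 1)
    {f : StrongDual ℝ X} (hf : f ∈ K) {n i j : ℕ} (hi : n ≤ i) (hj : n ≤ j) :
    |f (x i) - f (x j)| ≤ tailOsc x K n := by
  refine le_csSup ⟨2 * M, ?_⟩ ⟨i, j, hi, hj, f, hf, rfl⟩
  rintro _ ⟨i, j, -, -, f, hf, rfl⟩
  exact abs_apply_sub_apply_le_two_mul hx (mem_closedBall_zero_iff.mp (hK hf)) i j

theorem bddBelow_range_tailOsc (x : ℕ → X) (K : Set (StrongDual ℝ X)) :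
    BddBelow (range (tailOsc x K)) :=
  ⟨0, by rintro _ ⟨n, rfl⟩; exact tailOsc_nonneg x K n⟩

theorem asympOsc_nonneg (x : ℕ → X) (K : Set (StrongDual ℝ X)) : 0 ≤ asympOsc x K :=
  le_ciInf (tailOsc_nonneg x K)

theorem bddAbove_range_asympOsc (hx : ∀ n, ‖x n‖ ≤ M) {ι : Type*}
    {K : ι → Set (StrongDual ℝ X)} (hK : ∀ i, K i ⊆ closedBall 0 1) : BddAbove (range fun i => asympOsc x (K i)) := by
  refine ⟨2 * M, ?_⟩
  rintro _ ⟨i, rfl⟩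
  exact ciInf_le_of_le (bddBelow_range_tailOsc x (K i)) 0 (tailOsc_le hx (hK i) 0)

theorem asympOsc_le_of_isCompact (hx : ∀ n, ‖x n‖ ≤ M) (hK : K ⊆ closedBall 0 1)
    (hKc : IsCompact K) {d : ℝ} (hd₀ : 0 ≤ d) (hd : ∀ f ∈ K, asympOsc x {f} ≤ d) :
    asympOsc x K ≤ d := by
  have hM : 0 ≤ M := (norm_nonneg _).trans (hx 0)
  refine le_of_forall_pos_le_add fun ε hε => ?_
  set η := ε / (4 * M + 1)
  have hη : η * (2 * M) ≤ ε / 2 := by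
    rw [div_mul_eq_mul_div, div_le_iff₀ (by positivity)]
    nlinarith
  obtain ⟨t, htK, ht, hKt⟩ := hKc.finite_cover_balls (e := η) (by positivity)
  have hcentres : ∀ᶠ n in atTop, ∀ g ∈ t, ∀ i j, n ≤ i → n ≤ j →
      |g (x i) - g (x j)| < d + ε / 2 := by
    refine (eventually_all_finite ht).2 fun g hg => ?_
    obtain ⟨N, hN⟩ := exists_lt_of_ciInf_lt ((hd g (htK hg)).trans_lt (lt_add_of_pos_right d
      (half_pos hε)))
    refine eventually_atTop.2 ⟨N, fun n hn i j hi hj => lt_of_le_of_lt ?_ hN⟩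
    exact abs_apply_sub_apply_le_tailOsc hx (singleton_subset_iff.2 (hK (htK hg))) rfl
      (hn.trans hi) (hn.trans hj)
  obtain ⟨N, hN⟩ := hcentres.exists
  refine (ciInf_le (bddBelow_range_tailOsc x K) N).trans (Real.sSup_le ?_ (by positivity))
  rintro _ ⟨i, j, hi, hj, f, hf, rfl⟩
  obtain ⟨g, hg, hfg⟩ := mem_iUnion₂.1 (hKt hf)
  have hfg' : ‖f - g‖ ≤ η := by rw [← dist_eq_norm]; exact (mem_ball.1 hfg).le
  calc |f (x i) - f (x j)| ≤ |g (x i) - g (x j)| + |(f - g) (x i) - (f - g) (x j)| := by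
        refine le_of_eq_of_le (congrArg abs ?_) (abs_add_le _ _)
        simp only [sub_apply]
        ring
    _ ≤ (d + ε / 2) + η * (2 * M) := add_le_add (hN g hg i j hi hj).le
        ((abs_apply_sub_apply_le hx (f - g) i j).trans (by gcongr))
    _ ≤ d + ε := by linarith

end Oscillation

theorem statement13_general {X : Type*} [NormedAddCommGroup X] [NormedSpace ℝ X]
    (hSchur : ∀ f : ℕ → StrongDual ℝ X, WeaklyNull f →
      Tendsto (fun n => ‖f n‖) atTop (nhds 0))
    (x : ℕ → X) (hx : ∃ M : ℝ, ∀ n, ‖x n‖ ≤ M) :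
    caRho x = deltaSeq x := by
  obtain ⟨M, hM⟩ := hx
  have hδ₀ : 0 ≤ deltaSeq x :=
    deltaSeq_eq_iSup_asympOsc x ▸ Real.iSup_nonneg fun _ => asympOsc_nonneg x _
  have hδ : ∀ f ∈ closedBall (0 : StrongDual ℝ X) 1, asympOsc x {f} ≤ deltaSeq x := by
    intro f hf
    rw [deltaSeq_eq_iSup_asympOsc]
    exact le_ciSup (bddAbove_range_asympOsc hM fun g : closedBall (0 : StrongDual ℝ X) 1 =>
      singleton_subset_iff.2 g.2) ⟨f, hf⟩
  rw [caRho_eq_iSup_asympOsc]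
  apply le_antisymm
  · refine Real.iSup_le (fun K => ?_) hδ₀
    exact asympOsc_le_of_isCompact hM K.2.1 (K.2.2.isCompact_of_hasSchurProperty hSchur) hδ₀
      fun f hf => hδ f (K.2.1 hf)
  · rw [deltaSeq_eq_iSup_asympOsc]
    refine Real.iSup_le (fun f => ?_) (Real.iSup_nonneg fun _ => asympOsc_nonneg x _)
    exact le_ciSup (bddAbove_range_asympOsc hM
        fun K : {K : Set (StrongDual ℝ X) // K ⊆ closedBall 0 1 ∧ IsWeaklyCompact K} => K.2.1)
      ⟨{(f : StrongDual ℝ X)}, singleton_subset_iff.2 f.2, isWeaklyCompact_singleton _⟩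

/-- If `X*` has the Schur property, then `ca_ρ(x_n) = δ(x_n)` for every
bounded sequence `(x_n)` in `X`. -/
theorem statement13 {X : Type*} [NormedAddCommGroup X] [NormedSpace ℝ X] [CompleteSpace X]
    (hSchur : ∀ f : ℕ → StrongDual ℝ X, WeaklyNull f →
      Tendsto (fun n => ‖f n‖) atTop (nhds 0))
    (x : ℕ → X) (hx : ∃ M : ℝ, ∀ n, ‖x n‖ ≤ M) :
    caRho x = deltaSeq x :=
  statement13_general hSchur x hx

end
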